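/- arXiv:0709.1597 — 2 statements merged into one kernel-verified Lean document; each statement's English description precedes it below -/
import Mathlib

section
/- Let ψ be a smooth compactly supported function on ℂ, let N ≥ 1 be an integer, and let a ≥ 1 be an integer. Then the function λ ↦ ∫_ℂ |z^a|^{2λ} ψ(z)/z^N dA(z) extends holomorphically to {λ : Re λ > (N - 1)/(2a) - 1/(2a)} ⊇ {λ : Re λ > -1/(2a) + (N-1)/(2a)}; in particular for N ≤ 1 it is holomorphic on {Re λ > -1/(2a)}. -/
open MeasureTheory Complex Real

lemma aux_integrable (ψ : ℂ → ℂ) (hc : Continuous ψ) (hs : HasCompactSupport ψ)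
    {q : ℝ} (hq : -2 < q) : Integrable fun z : ℂ => ‖z‖ ^ q * ‖ψ z‖ := by
  obtain ⟨M, hM⟩ := hs.exists_bound_of_continuous hc
  have hM0 : 0 ≤ M := le_trans (norm_nonneg _) (hM 0)
  obtain ⟨R, hR⟩ := hs.isBounded.subset_closedBall 0
  have hG : Integrable fun z : ℂ => ‖z‖ ^ q * Real.exp (-‖z‖ ^ (1 : ℝ)) := by
    by_contra h
    have hval := Complex.integral_rpow_mul_exp_neg_rpow (le_refl (1 : ℝ)) hq
    rw [MeasureTheory.integral_undef h] at hval
    have h1 : 0 < 2 * Real.pi / 1 * Real.Gamma ((q + 2) / 1) := by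
      have h2 := Real.Gamma_pos_of_pos (by linarith : (0:ℝ) < (q + 2) / 1)
      have := Real.pi_pos
      positivity
    exact absurd hval.symm (ne_of_gt h1)
  refine (hG.const_mul (M * Real.exp R)).mono' ?_ ?_
  · exact ((measurable_norm.pow measurable_const).mul hc.measurable.norm).aestronglyMeasurable
  · filter_upwards with z
    rw [Real.norm_eq_abs, _root_.abs_of_nonneg (by positivity)]
    by_cases hz : z ∈ tsupport ψ
    · have h1 : ‖z‖ ≤ R := by simpa using hR hz
      have h2 : (1 : ℝ) ≤ Real.exp R * Real.exp (-‖z‖) := by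
        rw [← Real.exp_add]
        exact Real.one_le_exp (by linarith)
      calc ‖z‖ ^ q * ‖ψ z‖ ≤ ‖z‖ ^ q * M := by
            gcongr
            exact hM z
        _ = ‖z‖ ^ q * M * 1 := by ring
        _ ≤ ‖z‖ ^ q * M * (Real.exp R * Real.exp (-‖z‖)) := by
            refine mul_le_mul_of_nonneg_left h2 (by positivity)
        _ = M * Real.exp R * (‖z‖ ^ q * Real.exp (-‖z‖ ^ (1:ℝ))) := by
            rw [Real.rpow_one]; ring
    · have hz0 : ψ z = 0 := image_eq_zero_of_notMem_tsupport hz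
      simp only [hz0, norm_zero, mul_zero]
      positivity

lemma aux_bound {aR δ t s r : ℝ} (haR : 0 < aR) (hδ : 0 < δ) (hr : 0 < r)
    (hs : |s - t| ≤ δ / 4) :
    2 * aR * |Real.log r| * r ^ s ≤ 32 * aR / δ * (r ^ (t - δ / 2) + r ^ (t + δ / 2)) := by
  have hη : 0 < δ / 8 := by linarith
  have hs' := abs_le.mp hs
  have p1 : 0 ≤ r ^ (δ/8) := Real.rpow_nonneg hr.le _
  have p2 : 0 ≤ r ^ (-(δ/8)) := Real.rpow_nonneg hr.le _
  have hlog : |Real.log r| ≤ (r ^ (δ/8) + r ^ (-(δ/8))) / (δ/8) := by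
    have h1 : Real.log r ≤ r ^ (δ/8) / (δ/8) := Real.log_le_rpow_div hr.le hη
    have h2 : -Real.log r ≤ r ^ (-(δ/8)) / (δ/8) := by
      rw [← Real.log_inv]
      have := Real.log_le_rpow_div (inv_nonneg.2 hr.le) hη
      rwa [Real.inv_rpow hr.le, ← Real.rpow_neg hr.le] at this
    rw [abs_le]
    constructor
    · have : r ^ (-(δ/8)) / (δ/8) ≤ (r ^ (δ/8) + r ^ (-(δ/8))) / (δ/8) := by
        gcongr
        linarith
      linarith
    · have : r ^ (δ/8) / (δ/8) ≤ (r ^ (δ/8) + r ^ (-(δ/8))) / (δ/8) := by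
        gcongr
        linarith
      linarith
  have hcomp : ∀ p : ℝ, t - δ/2 ≤ p → p ≤ t + δ/2 → r ^ p ≤ r ^ (t - δ/2) + r ^ (t + δ/2) := by
    intro p h1 h2
    rcases le_total r 1 with h | h
    · have := Real.rpow_le_rpow_of_exponent_ge hr h h1
      have h3 : 0 ≤ r ^ (t + δ/2) := Real.rpow_nonneg hr.le _
      linarith
    · have := Real.rpow_le_rpow_of_exponent_le h h2
      have h3 : 0 ≤ r ^ (t - δ/2) := Real.rpow_nonneg hr.le _
      linarith
  have e1 : r ^ (s + δ/8) ≤ r ^ (t - δ/2) + r ^ (t + δ/2) :=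
    hcomp _ (by linarith [hs'.1]) (by linarith [hs'.2])
  have e2 : r ^ (s - δ/8) ≤ r ^ (t - δ/2) + r ^ (t + δ/2) :=
    hcomp _ (by linarith [hs'.1]) (by linarith [hs'.2])
  have hrs : 0 ≤ r ^ s := Real.rpow_nonneg hr.le _
  calc 2 * aR * |Real.log r| * r ^ s
      ≤ 2 * aR * ((r ^ (δ/8) + r ^ (-(δ/8))) / (δ/8)) * r ^ s := by
        gcongr
    _ = (2 * aR / (δ/8)) * (r ^ (s + δ/8) + r ^ (s - δ/8)) := by
        rw [Real.rpow_add hr, show s - δ/8 = s + -(δ/8) by ring, Real.rpow_add hr]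
        field_simp
    _ ≤ (2 * aR / (δ/8)) * ((r ^ (t - δ/2) + r ^ (t + δ/2)) + (r ^ (t - δ/2) + r ^ (t + δ/2))) := by
        gcongr
    _ = 32 * aR / δ * (r ^ (t - δ/2) + r ^ (t + δ/2)) := by
        field_simp
        ring

lemma aux_comp {r : ℝ} (hr : 0 < r) {p u v : ℝ} (h1 : u ≤ p) (h2 : p ≤ v) :
    r ^ p ≤ r ^ u + r ^ v := by
  rcases le_total r 1 with h | h
  · have := Real.rpow_le_rpow_of_exponent_ge hr h h1
    have h3 : 0 ≤ r ^ v := Real.rpow_nonneg hr.le _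
    linarith
  · have := Real.rpow_le_rpow_of_exponent_le h h2
    have h3 : 0 ≤ r ^ u := Real.rpow_nonneg hr.le _
    linarith

lemma aux_norm (ψ : ℂ → ℂ) (N a : ℕ) (w : ℂ) {z : ℂ} (hz : z ≠ 0) :
    ‖((‖z ^ a‖ : ℝ) : ℂ) ^ w * ψ z / z ^ N‖
      = ‖z‖ ^ ((a : ℝ) * w.re - N) * ‖ψ z‖ := by
  have hr : 0 < ‖z‖ := norm_pos_iff.mpr hz
  have hp : 0 < ‖z ^ a‖ := by rw [norm_pow]; positivity
  simp only [norm_div, norm_mul]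
  rw [Complex.norm_cpow_eq_rpow_re_of_pos hp, norm_pow, norm_pow,
    ← Real.rpow_natCast ‖z‖ a, ← Real.rpow_mul hr.le,
    ← Real.rpow_natCast ‖z‖ N, Real.rpow_sub hr]
  field_simp

lemma aux_norm' (ψ : ℂ → ℂ) (N a : ℕ) (w : ℂ) {z : ℂ} (hz : z ≠ 0) :
    ‖((‖z ^ a‖ : ℝ) : ℂ) ^ w * Complex.log ((‖z ^ a‖ : ℝ) : ℂ) * 2
        * (ψ z / z ^ N)‖
      = 2 * (a : ℝ) * |Real.log ‖z‖| * (‖z‖ ^ ((a : ℝ) * w.re - N) * ‖ψ z‖) := by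
  have hr : 0 < ‖z‖ := norm_pos_iff.mpr hz
  have hp : 0 < ‖z ^ a‖ := by rw [norm_pow]; positivity
  have hlog : ‖Complex.log ((‖z ^ a‖ : ℝ) : ℂ)‖ = (a : ℝ) * |Real.log ‖z‖| := by
    rw [← Complex.ofReal_log hp.le, Complex.norm_real, Real.norm_eq_abs, norm_pow,
      Real.log_pow, abs_mul, Nat.abs_cast]
  have h1 : ‖((‖z ^ a‖ : ℝ) : ℂ) ^ w * ψ z / z ^ N‖
      = ‖z‖ ^ ((a : ℝ) * w.re - N) * ‖ψ z‖ := aux_norm ψ N a w hz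
  rw [mul_div_assoc, norm_mul] at h1
  simp only [norm_mul]
  rw [hlog, Complex.norm_ofNat]
  linear_combination (2 * (a : ℝ) * |Real.log ‖z‖|) * h1

/-- For smooth compactly supported ψ on ℂ, integers N ≥ 1 and a ≥ 1,
the map λ ↦ ∫ |z^a|^{2λ} ψ(z)/z^N dA(z) extends holomorphically to
{λ : 2a · Re λ > N - 2}. -/
theorem stmt2 (ψ : ℂ → ℂ) (hψ : ContDiff ℝ (⊤ : ℕ∞) ψ) (hsupp : HasCompactSupport ψ)
    (N a : ℕ) (hN : 1 ≤ N) (ha : 1 ≤ a) :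
    ∃ F : ℂ → ℂ,
      DifferentiableOn ℂ F {l : ℂ | (N : ℝ) - 2 < 2 * a * l.re} ∧
      ∀ l : ℂ, (N : ℝ) / (2 * a) < l.re →
        F l = ∫ z : ℂ, ((‖z ^ a‖ : ℝ) : ℂ) ^ (2 * l) * ψ z / z ^ N := by
  have hψc := hψ.continuous
  refine ⟨fun l => ∫ z : ℂ, ((‖z ^ a‖ : ℝ) : ℂ) ^ (2 * l) * ψ z / z ^ N, ?_, fun l _ => rfl⟩
  intro l₀ hl₀
  refine DifferentiableAt.differentiableWithinAt ?_
  simp only [Set.mem_setOf_eq] at hl₀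
  have haR : (0 : ℝ) < a := by
    have : (1 : ℝ) ≤ a := by exact_mod_cast ha
    linarith
  set t : ℝ := 2 * a * l₀.re - N with ht_def
  have ht : -2 < t := by rw [ht_def]; linarith
  set δ : ℝ := t + 2 with hδ_def
  have hδ : 0 < δ := by rw [hδ_def]; linarith
  have hq1 : -2 < t - δ / 2 := by rw [hδ_def]; linarith
  have hq2 : -2 < t + δ / 2 := by linarith
  set ε : ℝ := δ / (8 * a) with hε_def
  have hε : 0 < ε := by rw [hε_def]; positivity
  have hexp : ∀ l : ℂ, l ∈ Metric.ball l₀ ε → |(2 * (a : ℝ) * l.re - N) - t| ≤ δ / 4 := by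
    intro l hl
    have h1 : |l.re - l₀.re| ≤ dist l l₀ := by
      rw [Complex.dist_eq, ← Complex.sub_re]
      exact Complex.abs_re_le_norm _
    have h3 : |l.re - l₀.re| ≤ ε := (h1.trans_lt (Metric.mem_ball.mp hl)).le
    have h4 : (2 * (a : ℝ) * l.re - N) - t = 2 * a * (l.re - l₀.re) := by rw [ht_def]; ring
    rw [h4, abs_mul, _root_.abs_of_nonneg (by positivity : (0 : ℝ) ≤ 2 * (a : ℝ))]
    calc 2 * (a : ℝ) * |l.re - l₀.re| ≤ 2 * a * ε := by gcongr
      _ = δ / 4 := by rw [hε_def]; field_simp; ring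
  have hb : Measurable fun z : ℂ => ((‖z ^ a‖ : ℝ) : ℂ) :=
    (Complex.continuous_ofReal.comp (continuous_norm.comp (continuous_pow a))).measurable
  have hmeas : ∀ l : ℂ, AEStronglyMeasurable
      (fun z : ℂ => ((‖z ^ a‖ : ℝ) : ℂ) ^ (2 * l) * ψ z / z ^ N) volume :=
    fun l => (((hb.pow measurable_const).mul hψc.measurable).div
      (measurable_id.pow_const N)).aestronglyMeasurable
  have hae : ∀ᵐ z : ℂ, z ≠ 0 := by
    have h0 : volume ({0} : Set ℂ) = 0 := measure_singleton 0
    rw [ae_iff]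
    convert h0 using 2
    ext z
    simp
  have key := hasDerivAt_integral_of_dominated_loc_of_deriv_le (μ := volume) (x₀ := l₀)
    (F := fun l z => ((‖z ^ a‖ : ℝ) : ℂ) ^ (2 * l) * ψ z / z ^ N)
    (F' := fun l z => ((‖z ^ a‖ : ℝ) : ℂ) ^ (2 * l)
      * Complex.log ((‖z ^ a‖ : ℝ) : ℂ) * 2 * (ψ z / z ^ N))
    (bound := fun z => 32 * a / δ * (‖z‖ ^ (t - δ / 2) * ‖ψ z‖ + ‖z‖ ^ (t + δ / 2) * ‖ψ z‖))
    (Metric.ball_mem_nhds l₀ hε) (Filter.Eventually.of_forall hmeas) ?_ ?_ ?_ ?_ ?_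
  · exact key.2.differentiableAt
  · -- integrability at l₀
    refine ((aux_integrable ψ hψc hsupp hq1).add (aux_integrable ψ hψc hsupp hq2)).mono'
      (hmeas l₀) ?_
    filter_upwards [hae] with z hz
    rw [aux_norm ψ N a (2 * l₀) hz,
      show (a : ℝ) * ((2 * l₀).re) - N = t by rw [ht_def]; simp; ring]
    have hr : 0 < ‖z‖ := norm_pos_iff.mpr hz
    have := aux_comp hr (by linarith : t - δ / 2 ≤ t) (by linarith : t ≤ t + δ / 2)
    have hψ0 : (0:ℝ) ≤ ‖ψ z‖ := norm_nonneg _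
    simp only [Pi.add_apply]
    nlinarith [this]
  · -- measurability of F' l₀
    exact ((((hb.pow measurable_const).mul (Complex.measurable_log.comp hb)).mul
      measurable_const).mul (hψc.measurable.div (measurable_id.pow_const N))).aestronglyMeasurable
  · -- bound
    filter_upwards [hae] with z hz
    intro l hl
    have hr : 0 < ‖z‖ := norm_pos_iff.mpr hz
    rw [aux_norm' ψ N a (2 * l) hz,
      show (a : ℝ) * ((2 * l).re) - N = 2 * (a : ℝ) * l.re - N by simp; ring]
    have hbd := aux_bound haR hδ hr (hexp l hl)
    have hψ0 : (0:ℝ) ≤ ‖ψ z‖ := norm_nonneg _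
    nlinarith [hbd, Real.rpow_nonneg hr.le (2 * (a : ℝ) * l.re - N),
      abs_nonneg (Real.log ‖z‖)]
  · -- bound integrable
    exact ((aux_integrable ψ hψc hsupp hq1).add (aux_integrable ψ hψc hsupp hq2)).const_mul _
  · -- differentiability
    filter_upwards [hae] with z hz
    intro l _
    have hc0 : (0 : ℝ) < ‖z ^ a‖ := by rw [norm_pow]; exact pow_pos (norm_pos_iff.mpr hz) a
    have hc : ((‖z ^ a‖ : ℝ) : ℂ) ≠ 0 := Complex.ofReal_ne_zero.mpr (ne_of_gt hc0)
    have hd : HasDerivAt (fun l : ℂ => (2 : ℂ) * l) 2 l := by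
      simpa using (hasDerivAt_id l).const_mul (2 : ℂ)
    have := (hd.const_cpow (Or.inl hc)).mul_const (ψ z / z ^ N)
    simpa only [mul_div_assoc] using this
end

section
/- Let ψ be smooth and compactly supported on ℂ. The function λ ↦ λ ∫_ℂ |z|^{2λ - 2} ψ(z) dA(z), defined for Re λ > 0, extends holomorphically across λ = 0, and its value at λ = 0 equals π ψ(0). -/
open MeasureTheory Complex Set Metric
open scoped Real

namespace Stmt3Aux

lemma measurable_cpow_abs (w : ℂ) : Measurable fun z : ℂ => (‖z‖ : ℂ) ^ w := by
  have h : (fun z : ℂ => (‖z‖ : ℂ) ^ w)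
      = fun z : ℂ => if z = 0 then (if w = 0 then 1 else 0)
        else Complex.exp (Complex.log (‖z‖) * w) := by
    funext z
    by_cases hz : z = 0
    · rcases eq_or_ne w 0 with rfl | hw <;> simp [hz, Complex.cpow_def, *]
    · rw [if_neg hz, Complex.cpow_def,
        if_neg (by simpa [Complex.ofReal_eq_zero, map_eq_zero] using hz)]
  rw [h]
  refine Measurable.ite (measurableSet_singleton 0) measurable_const ?_
  exact Complex.measurable_exp.comp
    ((Complex.measurable_log.comp
      (Complex.measurable_ofReal.comp continuous_norm.measurable)).mul_const w)

lemma measurable_rpow_abs (t : ℝ) : Measurable fun z : ℂ => ‖z‖ ^ t := by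
  have h : (fun z : ℂ => ‖z‖ ^ t)
      = fun z : ℂ => if z = 0 then (if t = 0 then 1 else 0)
        else Real.exp (Real.log (‖z‖) * t) := by
    funext z
    by_cases hz : z = 0
    · rcases eq_or_ne t 0 with rfl | ht <;> simp [hz, Real.zero_rpow, *]
    · rw [if_neg hz, Real.rpow_def_of_pos (by simpa [AbsoluteValue.pos_iff] using hz)]
  rw [h]
  refine Measurable.ite (measurableSet_singleton 0) measurable_const ?_
  exact Real.measurable_exp.comp
    ((Real.measurable_log.comp continuous_norm.measurable).mul_const t)

lemma ae_ne_zero : ∀ᵐ z : ℂ, z ≠ 0 := by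
  exact compl_mem_ae_iff.mpr (measure_singleton (0 : ℂ))

/-- Integrability transfer to polar coordinates. -/
lemma integrable_comp_polar {E : Type*} [NormedAddCommGroup E] [NormedSpace ℝ E]
    (f : ℂ → E) :
    Integrable f ↔
      IntegrableOn (fun p : ℝ × ℝ => p.1 • f (Complex.polarCoord.symm p)) polarCoord.target := by
  rw [← (Complex.volume_preserving_equiv_real_prod.symm).integrable_comp_emb
      Complex.measurableEquivRealProd.symm.measurableEmbedding]
  have h1 : Integrable (f ∘ ⇑Complex.measurableEquivRealProd.symm) volume ↔
      IntegrableOn (f ∘ ⇑Complex.measurableEquivRealProd.symm) polarCoord.source := by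
    unfold IntegrableOn
    rw [Measure.restrict_congr_set polarCoord_source_ae_eq_univ, Measure.restrict_univ]
  rw [h1, ← polarCoord.symm_image_target_eq_source]
  rw [integrableOn_image_iff_integrableOn_abs_det_fderiv_smul volume
      polarCoord.open_target.measurableSet
      (fun p _ => (hasFDerivAt_polarCoord_symm p).hasFDerivWithinAt)
      polarCoord.symm.injOn (f ∘ ⇑Complex.measurableEquivRealProd.symm)]
  refine integrableOn_congr_fun (fun p hp => ?_) polarCoord.open_target.measurableSet
  have hdet : (LinearMap.toContinuousLinearMap
      ((Matrix.toLin (Module.Basis.finTwoProd ℝ) (Module.Basis.finTwoProd ℝ))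
        !![Real.cos p.2, -p.1 * Real.sin p.2; Real.sin p.2, p.1 * Real.cos p.2])).det = p.1 := by
    conv_rhs => rw [← one_mul p.1, ← Real.cos_sq_add_sin_sq p.2]
    simp only [neg_mul, LinearMap.det_toContinuousLinearMap, LinearMap.det_toLin,
      Matrix.det_fin_two_of, sub_neg_eq_add]
    ring
  rw [polarCoord_target] at hp
  rw [fderivPolarCoordSymm, hdet, abs_of_pos hp.1]
  rfl


lemma integrableOn_rpow_abs_ball {t : ℝ} (ht : -2 < t) {R : ℝ} (hR : 0 < R) :
    IntegrableOn (fun z : ℂ => ‖z‖ ^ t) (ball (0 : ℂ) R) := by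
  rw [← integrable_indicator_iff measurableSet_ball]
  rw [integrable_comp_polar ((ball (0:ℂ) R).indicator fun z => ‖z‖ ^ t)]
  have hIoo : IntegrableOn (fun r : ℝ => r ^ (t + 1)) (Ioo 0 R) := by
    exact (intervalIntegrable_iff_integrableOn_Ioo_of_le hR.le).1
      (intervalIntegral.intervalIntegrable_rpow' (by linarith))
  have hmodel : IntegrableOn
      (fun p : ℝ × ℝ => (Ioo (0:ℝ) R).indicator (fun r => r ^ (t + 1)) p.1 * (1:ℝ))
      polarCoord.target := by
    rw [IntegrableOn, polarCoord_target, Measure.volume_eq_prod, ← Measure.prod_restrict]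
    exact Integrable.mul_prod
      (((integrable_indicator_iff measurableSet_Ioo).2 hIoo).restrict)
      (integrable_const 1)
  refine hmodel.congr_fun (fun p hp => ?_) polarCoord.open_target.measurableSet
  rw [polarCoord_target] at hp
  obtain ⟨hr, _⟩ := hp
  rw [mem_Ioi] at hr
  have habs : ‖Complex.polarCoord.symm p‖ = p.1 := by
    rw [Complex.norm_polarCoord_symm, abs_of_pos hr]
  by_cases hrR : p.1 < R
  · have hmem : Complex.polarCoord.symm p ∈ ball (0:ℂ) R := by
      rw [mem_ball_zero_iff, habs]; exact hrR
    beta_reduce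
    rw [indicator_of_mem (show p.1 ∈ Ioo 0 R from ⟨hr, hrR⟩) , indicator_of_mem hmem, mul_one,
      smul_eq_mul, habs, Real.rpow_add_one hr.ne']
    ring
  · have hmem : Complex.polarCoord.symm p ∉ ball (0:ℂ) R := by
      rw [mem_ball_zero_iff, habs]; exact hrR
    beta_reduce
    rw [indicator_of_notMem (show p.1 ∉ Ioo 0 R from fun h => hrR h.2), indicator_of_notMem hmem, smul_zero, zero_mul]

lemma integral_cpow_abs_ball {l : ℂ} (hl : 0 < l.re) {R : ℝ} (hR : 0 < R) :
    ∫ z in ball (0:ℂ) R, ((‖z‖ : ℂ) ^ (2*l - 2)) = ↑Real.pi * (R:ℂ) ^ (2*l) / l := by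
  have hl0 : l ≠ 0 := fun h => by simp [h] at hl
  have h2l : (2*l : ℂ) ≠ 0 := by
    simpa using hl0
  rw [← integral_indicator measurableSet_ball,
    ← Complex.integral_comp_polarCoord_symm]
  have heq : EqOn
      (fun p : ℝ × ℝ =>
        p.1 • (ball (0:ℂ) R).indicator (fun z => (‖z‖ : ℂ) ^ (2*l-2))
          (Complex.polarCoord.symm p))
      (fun p : ℝ × ℝ => (Ioo (0:ℝ) R).indicator (fun r => ((r:ℂ)) ^ (2*l-1)) p.1
          * (fun _ : ℝ => (1:ℂ)) p.2)
      polarCoord.target := by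
    intro p hp
    rw [polarCoord_target] at hp
    obtain ⟨hr, _⟩ := hp
    rw [mem_Ioi] at hr
    have habs : ‖Complex.polarCoord.symm p‖ = p.1 := by
      rw [Complex.norm_polarCoord_symm, abs_of_pos hr]
    by_cases hrR : p.1 < R
    · have hmem : Complex.polarCoord.symm p ∈ ball (0:ℂ) R := by
        rw [mem_ball_zero_iff, habs]; exact hrR
      simp only []
      rw [indicator_of_mem hmem, indicator_of_mem (show p.1 ∈ Ioo 0 R from ⟨hr, hrR⟩),
        mul_one, habs, real_smul,
        show (2*l - 1 : ℂ) = (2*l - 2) + 1 by ring,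
        Complex.cpow_add _ _ (by exact_mod_cast hr.ne'), Complex.cpow_one]
      ring
    · have hmem : Complex.polarCoord.symm p ∉ ball (0:ℂ) R := by
        rw [mem_ball_zero_iff, habs]; exact hrR
      simp only []
      rw [indicator_of_notMem hmem, indicator_of_notMem (fun h => hrR h.2), smul_zero, zero_mul]
  rw [setIntegral_congr_fun polarCoord.open_target.measurableSet heq]
  rw [polarCoord_target, Measure.volume_eq_prod,
    setIntegral_prod_mul ((Ioo (0:ℝ) R).indicator (fun r => ((r:ℂ)) ^ (2*l-1))) (fun _ : ℝ => (1:ℂ))]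
  rw [setIntegral_indicator measurableSet_Ioo,
    Set.inter_eq_self_of_subset_right Set.Ioo_subset_Ioi_self]
  rw [← integral_Ioc_eq_integral_Ioo, ← intervalIntegral.integral_of_le hR.le]
  rw [integral_cpow (Or.inl (by simp only [Complex.sub_re, Complex.mul_re]; norm_num; linarith))]
  rw [setIntegral_const]
  rw [Real.volume_real_Ioo, show π - -π = 2 * π by ring,
    max_eq_left (by positivity), real_smul, mul_one]
  rw [show (2*l - 1 + 1 : ℂ) = 2*l by ring, Complex.ofReal_zero,
    Complex.zero_cpow h2l, sub_zero]
  push_cast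
  field_simp


lemma re_2w (w : ℂ) : (2*w - 2).re = 2 * w.re - 2 := by
  simp [Complex.sub_re, Complex.mul_re]

/-- Workhorse integrability bound. -/
lemma integrableOn_cpow_abs_mul {w : ℂ} {R K u : ℝ} (hR : 0 < R) (hu : -2 < w.re + u)
    {g : ℂ → ℂ} (hgm : Measurable g) (hg : ∀ z : ℂ, z ≠ 0 → ‖g z‖ ≤ K * ‖z‖ ^ u) :
    IntegrableOn (fun z => (‖z‖ : ℂ) ^ w * g z) (ball (0:ℂ) R) := by
  have hmeas : AEStronglyMeasurable (fun z => (‖z‖ : ℂ) ^ w * g z)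
      (volume.restrict (ball (0:ℂ) R)) :=
    ((measurable_cpow_abs w).mul hgm).aestronglyMeasurable.restrict
  refine Integrable.mono' ((integrableOn_rpow_abs_ball hu hR).const_mul K) hmeas ?_
  filter_upwards [ae_restrict_of_ae (μ := volume) (s := ball (0:ℂ) R) ae_ne_zero] with z hz
  have ht : 0 < ‖z‖ := by simpa [AbsoluteValue.pos_iff] using hz
  rw [norm_mul, norm_cpow_eq_rpow_re_of_pos ht]
  calc ‖z‖ ^ w.re * ‖g z‖ ≤ ‖z‖ ^ w.re * (K * ‖z‖ ^ u) :=
        mul_le_mul_of_nonneg_left (hg z hz) (Real.rpow_nonneg ht.le _)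
    _ = K * ‖z‖ ^ (w.re + u) := by rw [Real.rpow_add ht]; ring

lemma key_bound {t a c : ℝ} (ht : 0 < t) (h1 : -4⁻¹ ≤ a) (h2 : a ≤ c) :
    |Real.log t| * t ^ (2*a - 1) ≤ 4 * (t ^ (-(7:ℝ)/4) + t ^ (2*(c + 8⁻¹) - 2⁻¹)) := by
  rcases le_or_gt t 1 with h | h
  · have hlog : |Real.log t| ≤ 4 * t ^ (-(4:ℝ)⁻¹) := by
      rw [_root_.abs_of_nonpos (Real.log_nonpos ht.le h)]
      have h' := Real.log_le_rpow_div (x := t⁻¹) (by positivity)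
        (show (0:ℝ) < 4⁻¹ by norm_num)
      rw [Real.log_inv] at h'
      calc -Real.log t ≤ (t⁻¹) ^ ((4:ℝ)⁻¹) / 4⁻¹ := h'
        _ = 4 * t ^ (-(4:ℝ)⁻¹) := by
            rw [Real.inv_rpow ht.le, ← Real.rpow_neg ht.le]; ring
    have hp : t ^ (2*a - 1) ≤ t ^ (-(3:ℝ)/2) :=
      Real.rpow_le_rpow_of_exponent_ge ht h (by linarith)
    calc |Real.log t| * t ^ (2*a-1) ≤ (4 * t ^ (-(4:ℝ)⁻¹)) * t ^ (-(3:ℝ)/2) :=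
          mul_le_mul hlog hp (Real.rpow_nonneg ht.le _) (by positivity)
      _ = 4 * t ^ (-(7:ℝ)/4) := by
          rw [mul_assoc, ← Real.rpow_add ht]; norm_num
      _ ≤ 4 * (t ^ (-(7:ℝ)/4) + t ^ (2*(c + 8⁻¹) - 2⁻¹)) := by
          nlinarith [Real.rpow_nonneg ht.le (2*(c + 8⁻¹) - 2⁻¹)]
  · have hlog : |Real.log t| ≤ 4 * t ^ ((4:ℝ)⁻¹) := by
      rw [_root_.abs_of_nonneg (Real.log_nonneg h.le)]
      calc Real.log t ≤ t ^ ((4:ℝ)⁻¹) / 4⁻¹ :=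
            Real.log_le_rpow_div ht.le (by norm_num)
        _ = 4 * t ^ ((4:ℝ)⁻¹) := by ring
    have hp : t ^ (2*a - 1) ≤ t ^ (2*c - 1) :=
      Real.rpow_le_rpow_of_exponent_le h.le (by linarith)
    calc |Real.log t| * t ^ (2*a-1) ≤ (4 * t ^ ((4:ℝ)⁻¹)) * t ^ (2*c - 1) :=
          mul_le_mul hlog hp (Real.rpow_nonneg ht.le _) (by positivity)
      _ = 4 * t ^ (2*c - 1 + 4⁻¹) := by rw [mul_assoc, ← Real.rpow_add ht, add_comm]
      _ ≤ 4 * t ^ (2*(c + 8⁻¹) - 2⁻¹) := by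
          have := Real.rpow_le_rpow_of_exponent_le h.le
            (show 2*c - 1 + 4⁻¹ ≤ 2*(c + 8⁻¹) - 2⁻¹ by linarith)
          linarith
      _ ≤ 4 * (t ^ (-(7:ℝ)/4) + t ^ (2*(c + 8⁻¹) - 2⁻¹)) := by
          nlinarith [Real.rpow_nonneg ht.le (-(7:ℝ)/4)]

lemma differentiableAt_H {R : ℝ} (hR : 0 < R) {K : ℝ} {g : ℂ → ℂ} (hgm : Measurable g)
    (hg : ∀ z, ‖g z‖ ≤ K * ‖z‖) {l₀ : ℂ} (hl₀ : -(8:ℝ)⁻¹ < l₀.re) :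
    DifferentiableAt ℂ
      (fun l : ℂ => ∫ z in ball (0:ℂ) R, (‖z‖ : ℂ) ^ (2*l - 2) * g z) l₀ := by
  have hK : 0 ≤ K := by
    have := (norm_nonneg (g 1)).trans (hg 1)
    simpa using this
  set μ := volume.restrict (ball (0:ℂ) R) with hμ
  set F' : ℂ → ℂ → ℂ := fun l z =>
    ((‖z‖ : ℂ) ^ (2*l - 2) * (2 * Complex.log (‖z‖))) * g z with hF'
  set bound : ℂ → ℝ := fun z =>
    (2*K) * (4 * (‖z‖ ^ (-(7:ℝ)/4)
      + ‖z‖ ^ (2*((l₀.re + 8⁻¹) + 8⁻¹) - 2⁻¹))) with hbound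
  have h1 : ∀ᶠ l in nhds l₀, AEStronglyMeasurable
      (fun z => (‖z‖ : ℂ) ^ (2*l - 2) * g z) μ :=
    Filter.Eventually.of_forall fun l =>
      ((measurable_cpow_abs (2*l-2)).mul hgm).aestronglyMeasurable.restrict
  have h2 : Integrable (fun z => (‖z‖ : ℂ) ^ (2*l₀ - 2) * g z) μ := by
    refine integrableOn_cpow_abs_mul (u := 1) hR (by rw [re_2w]; linarith) hgm
      (fun z _ => by rw [Real.rpow_one]; exact hg z)
  have h3 : AEStronglyMeasurable (F' l₀) μ := by
    refine (Measurable.mul (Measurable.mul (measurable_cpow_abs (2*l₀-2)) ?_) hgm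
      ).aestronglyMeasurable.restrict
    exact (Complex.measurable_log.comp
      (Complex.measurable_ofReal.comp continuous_norm.measurable)).const_mul 2
  have h4 : ∀ᵐ z ∂μ, ∀ l ∈ ball l₀ (8:ℝ)⁻¹, ‖F' l z‖ ≤ bound z := by
    filter_upwards [ae_restrict_of_ae (μ := volume) (s := ball (0:ℂ) R) ae_ne_zero]
      with z hz l hl
    have ht : 0 < ‖z‖ := by simpa [AbsoluteValue.pos_iff] using hz
    have hlre : |l.re - l₀.re| < 8⁻¹ := by
      have := (Complex.abs_re_le_norm (l - l₀)).trans_lt (by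
        simpa [Complex.dist_eq] using (mem_ball.mp hl))
      simpa [Complex.sub_re] using this
    have hre1 : -4⁻¹ ≤ l.re := by
      have := abs_lt.mp hlre; linarith [this.1, hl₀]
    have hre2 : l.re ≤ l₀.re + 8⁻¹ := by
      have := abs_lt.mp hlre; linarith [this.2]
    rw [hF']
    rw [norm_mul, norm_mul,
      norm_cpow_eq_rpow_re_of_pos ht, ← Complex.ofReal_log ht.le]
    rw [show ‖(2 : ℂ) * (Real.log (‖z‖) : ℂ)‖
        = 2 * |Real.log (‖z‖)| by
      rw [norm_mul]; simp]
    calc ‖z‖ ^ (2*l-2).re * (2 * |Real.log (‖z‖)|) * ‖g z‖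
        ≤ ‖z‖ ^ (2*l-2).re * (2 * |Real.log (‖z‖)|)
            * (K * ‖z‖) :=
          mul_le_mul_of_nonneg_left (hg z) (by positivity)
      _ = (2*K) * (|Real.log (‖z‖)|
            * ‖z‖ ^ (2 * l.re - 1)) := by
          rw [re_2w, show (2 * l.re - 1 : ℝ) = (2 * l.re - 2) + 1 by ring,
            Real.rpow_add_one ht.ne']
          ring
      _ ≤ bound z := by
          rw [hbound]
          have := key_bound (a := l.re) (c := l₀.re + 8⁻¹) ht hre1 hre2
          have h2K : (0:ℝ) ≤ 2*K := by linarith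
          exact mul_le_mul_of_nonneg_left this h2K
  have h5 : Integrable bound μ := by
    rw [hbound]
    have e1 : IntegrableOn (fun z : ℂ => ‖z‖ ^ (-(7:ℝ)/4)) (ball (0:ℂ) R) :=
      integrableOn_rpow_abs_ball (by norm_num) hR
    have e2 : IntegrableOn
        (fun z : ℂ => ‖z‖ ^ (2*((l₀.re + 8⁻¹) + 8⁻¹) - 2⁻¹)) (ball (0:ℂ) R) :=
      integrableOn_rpow_abs_ball (by linarith) hR
    simpa [mul_assoc] using ((e1.add e2).const_mul (2*K*4))
  have h6 : ∀ᵐ z ∂μ, ∀ l ∈ ball l₀ (8:ℝ)⁻¹,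
      HasDerivAt (fun l : ℂ => (‖z‖ : ℂ) ^ (2*l - 2) * g z) (F' l z) l := by
    filter_upwards [ae_restrict_of_ae (μ := volume) (s := ball (0:ℂ) R) ae_ne_zero]
      with z hz l _
    have hc : (‖z‖ : ℂ) ≠ 0 := by
      simpa [Complex.ofReal_eq_zero, map_eq_zero] using hz
    have hin : HasDerivAt (fun l : ℂ => 2*l - 2) 2 l := by
      simpa using ((hasDerivAt_id l).const_mul (2:ℂ)).sub_const 2
    have hout := (hin.const_cpow (c := (‖z‖ : ℂ)) (Or.inl hc)).mul_const (g z)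
    refine hout.congr_deriv ?_
    rw [hF']
    ring
  have main := hasDerivAt_integral_of_dominated_loc_of_deriv_le (ball_mem_nhds l₀ (by norm_num : (0:ℝ) < 8⁻¹))
    h1 h2 h3 h4 h5 h6
  exact main.2.differentiableAt


end Stmt3Aux

open Stmt3Aux

/-- For smooth compactly supported ψ on ℂ, the map
λ ↦ λ ∫ |z|^{2λ-2} ψ(z) dA(z), defined for Re λ > 0, extends holomorphically
across λ = 0, with value π ψ(0) at λ = 0. -/
theorem stmt3 (ψ : ℂ → ℂ) (hψ : ContDiff ℝ (⊤ : ℕ∞) ψ) (hsupp : HasCompactSupport ψ) :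
    ∃ ε : ℝ, 0 < ε ∧ ∃ F : ℂ → ℂ,
      DifferentiableOn ℂ F {l : ℂ | -ε < l.re} ∧
      (∀ l : ℂ, 0 < l.re →
        F l = l * ∫ z : ℂ, (‖z‖ : ℂ) ^ (2 * l - 2) * ψ z) ∧
      F 0 = (Real.pi : ℂ) * ψ 0 := by
  obtain ⟨C, lip⟩ := hψ.lipschitzWith_of_hasCompactSupport hsupp (by simp)
  set K : ℝ := (C : ℝ) with hKdef
  obtain ⟨r, hr⟩ := (Metric.isBounded_iff_subset_closedBall 0).1 hsupp.isBounded
  set R : ℝ := max r 0 + 1 with hRdef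
  have hR : 0 < R := by positivity
  have hsub : tsupport ψ ⊆ ball (0:ℂ) R := by
    refine hr.trans (closedBall_subset_ball ?_)
    have := le_max_left r 0
    rw [hRdef]; linarith
  have hzero : ∀ z : ℂ, z ∉ ball (0:ℂ) R → ψ z = 0 := fun z hz =>
    image_eq_zero_of_notMem_tsupport (fun h => hz (hsub h))
  set g : ℂ → ℂ := fun z => ψ z - ψ 0 with hgdef
  have hgm : Measurable g := (hψ.continuous.measurable).sub measurable_const
  have hgK : ∀ z, ‖g z‖ ≤ K * ‖z‖ := by
    intro z
    have h := lip.dist_le_mul z 0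
    rw [Complex.dist_eq, Complex.dist_eq, sub_zero] at h
    simpa [hgdef] using h
  set H : ℂ → ℂ := fun l =>
    ∫ z in ball (0:ℂ) R, (‖z‖ : ℂ) ^ (2*l - 2) * g z with hHdef
  refine ⟨8⁻¹, by norm_num,
    fun l => l * H l + ↑Real.pi * ψ 0 * ((R:ℂ)) ^ (2*l), ?_, ?_, ?_⟩
  · intro l₀ hl₀
    rw [mem_setOf_eq] at hl₀
    apply DifferentiableAt.differentiableWithinAt
    refine DifferentiableAt.add ?_ ?_
    · exact differentiableAt_id.mul (differentiableAt_H hR hgm hgK hl₀)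
    · refine DifferentiableAt.const_mul ?_ _
      refine DifferentiableAt.const_cpow ?_ (Or.inl ?_)
      · exact (differentiableAt_id.const_mul 2)
      · exact_mod_cast hR.ne'
  · intro l hl
    have hl0 : l ≠ 0 := fun h => by simp [h] at hl
    have hint : ∫ z : ℂ, (‖z‖ : ℂ) ^ (2*l - 2) * ψ z
        = ∫ z in ball (0:ℂ) R, (‖z‖ : ℂ) ^ (2*l - 2) * ψ z :=
      (setIntegral_eq_integral_of_forall_compl_eq_zero
        (fun z hz => by rw [hzero z hz, mul_zero])).symm
    have hi1 : IntegrableOn (fun z => (‖z‖ : ℂ) ^ (2*l-2) * g z) (ball (0:ℂ) R) :=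
      integrableOn_cpow_abs_mul (u := 1) hR (by rw [re_2w]; linarith) hgm
        (fun z _ => by rw [Real.rpow_one]; exact hgK z)
    have hi2 : IntegrableOn (fun z => (‖z‖ : ℂ) ^ (2*l-2) * ψ 0) (ball (0:ℂ) R) :=
      integrableOn_cpow_abs_mul (u := 0) hR (by rw [re_2w]; linarith) measurable_const
        (fun z _ => by rw [Real.rpow_zero, mul_one])
    have hsplit : ∫ z in ball (0:ℂ) R, (‖z‖ : ℂ) ^ (2*l-2) * ψ z
        = H l + (∫ z in ball (0:ℂ) R, (‖z‖ : ℂ) ^ (2*l-2)) * ψ 0 := by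
      calc ∫ z in ball (0:ℂ) R, (‖z‖ : ℂ) ^ (2*l-2) * ψ z
          = ∫ z in ball (0:ℂ) R, ((‖z‖ : ℂ) ^ (2*l-2) * g z
              + (‖z‖ : ℂ) ^ (2*l-2) * ψ 0) := by
            refine setIntegral_congr_fun measurableSet_ball (fun z _ => ?_)
            rw [hgdef]; ring
        _ = H l + ∫ z in ball (0:ℂ) R, (‖z‖ : ℂ) ^ (2*l-2) * ψ 0 := by
            rw [integral_add hi1 hi2, hHdef]
        _ = H l + (∫ z in ball (0:ℂ) R, (‖z‖ : ℂ) ^ (2*l-2)) * ψ 0 := by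
            rw [integral_mul_const]
    rw [hint, hsplit, integral_cpow_abs_ball hl hR]
    field_simp
  · show (0:ℂ) * H 0 + ↑Real.pi * ψ 0 * ((R:ℂ)) ^ (2*(0:ℂ)) = ↑Real.pi * ψ 0
    rw [mul_zero, Complex.cpow_zero]
    ring
end
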